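/- Let x be uniformly distributed on the unit sphere S^{d-1} ⊂ ℝ^d. Then for any matrix A ∈ ℝ^{d×d}, the expectation of ‖Ax‖ satisfies ‖A‖_* / d ≤ 𝔼‖Ax‖ ≤ ‖A‖_F / √d, where ‖A‖_* is the nuclear norm (sum of singular values) and ‖A‖_F is the Frobenius norm. -/

import Mathlib

open MeasureTheory Matrix Real RealInnerProductSpace

noncomputable def frobNorm {d : ℕ} (A : Matrix (Fin d) (Fin d) ℝ) : ℝ :=
  Real.sqrt (∑ i, ∑ j, A i j ^ 2)

noncomputable def nuclearNorm {d : ℕ} (A : Matrix (Fin d) (Fin d) ℝ) : ℝ :=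
  ∑ i, Real.sqrt ((Matrix.isHermitian_iff_isSymm.mpr (Matrix.isSymm_transpose_mul_self A) :
    (Aᵀ * A).IsHermitian).eigenvalues i)

/-- `μ` is the uniform (rotation-invariant) probability distribution on the unit
sphere `S^{d-1} ⊂ ℝ^d`. -/
def IsUniformOnSphere {d : ℕ} (μ : Measure (EuclideanSpace ℝ (Fin d))) : Prop :=
  IsProbabilityMeasure μ ∧ (∀ᵐ x ∂μ, ‖x‖ = 1) ∧
  ∀ Q : Matrix (Fin d) (Fin d) ℝ, Qᵀ * Q = 1 →
    Measure.map (fun x => Matrix.toEuclideanLin Q x) μ = μ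

/-- The Beta function. -/
noncomputable def Beta (m n : ℝ) : ℝ := Real.Gamma m * Real.Gamma n / Real.Gamma (m + n)

noncomputable def ptilde (d : ℕ) : ℝ :=
  (1 + Beta ((d : ℝ) - 1) (1/2) / Beta (((d : ℝ) - 1)/2) (1/2))⁻¹

def A2 : Matrix (Fin 2) (Fin 2) ℝ := !![0, -1; 1, 0]

noncomputable def rot2 (θ : ℝ) : Matrix (Fin 2) (Fin 2) ℝ :=
  !![Real.cos θ, -Real.sin θ; Real.sin θ, Real.cos θ]

/-!
Rotation invariance (coordinate reflections and transpositions) together with `‖x‖ = 1`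
gives `𝔼[xᵢ xⱼ] = δᵢⱼ / d`, hence `𝔼⟪M x, x⟫ = tr M / d` for every matrix `M`. Since
`‖A x‖² = ⟪Aᵀ A x, x⟫`, the upper bound is Jensen's inequality
`(𝔼‖A x‖)² ≤ 𝔼‖A x‖² = ‖A‖_F² / d`.
For the lower bound let `P = (Aᵀ A)^{1/2}`: then `‖A x‖ = ‖P x‖ ≥ ⟪P x, x⟫` on the unit sphere,
and `𝔼⟪P x, x⟫ = tr P / d = ‖A‖_* / d`.
-/

open scoped ComplexOrder

namespace Matrix

variable {n 𝕜 : Type*} [Fintype n] [DecidableEq n] [RCLike 𝕜] {M : Matrix n n 𝕜}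

theorem IsHermitian.trace_cfc (hM : M.IsHermitian) (f : ℝ → ℝ) :
    (hM.cfc f).trace = ∑ i, (f (hM.eigenvalues i) : 𝕜) := by
  rw [IsHermitian.cfc, Unitary.conjStarAlgAut_apply, trace_mul_cycle, Unitary.coe_star_mul_self,
    one_mul, trace_diagonal]
  rfl

theorem IsHermitian.isHermitian_cfc (hM : M.IsHermitian) (f : ℝ → ℝ) :
    (hM.cfc f).IsHermitian := by
  rw [← hM.cfc_eq]
  exact cfc_predicate f M

theorem PosSemidef.cfc_sqrt_mul_self (hM : M.PosSemidef) :
    hM.1.cfc Real.sqrt * hM.1.cfc Real.sqrt = M := by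
  rw [← hM.1.cfc_eq, ← cfc_mul ..]
  conv_rhs => rw [← cfc_id' ℝ M hM.1.isSelfAdjoint]
  refine cfc_congr fun x hx => Real.mul_self_sqrt ?_
  rw [hM.1.spectrum_real_eq_range_eigenvalues] at hx
  obtain ⟨i, rfl⟩ := hx
  exact hM.eigenvalues_nonneg i

end Matrix

namespace Matrix

variable {m n : Type*} [Fintype m] [Fintype n] [DecidableEq m] [DecidableEq n]

theorem inner_toEuclideanLin_self (M : Matrix n n ℝ) (x : EuclideanSpace ℝ n) :
    ⟪toEuclideanLin M x, x⟫ = ∑ i, ∑ j, M i j * (x i * x j) := by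
  simp only [EuclideanSpace.inner_eq_star_dotProduct, ofLp_toLpLin, toLin'_apply, dotProduct,
    mulVec, star_trivial, Finset.mul_sum]
  exact Finset.sum_congr rfl fun i _ => Finset.sum_congr rfl fun j _ => by ring

theorem norm_toEuclideanLin_sq (A : Matrix m n ℝ) (x : EuclideanSpace ℝ n) :
    ‖toEuclideanLin A x‖ ^ 2 = ⟪toEuclideanLin (Aᵀ * A) x, x⟫ := by
  rw [← real_inner_self_eq_norm_sq, toLpLin_mul _ 2, ← conjTranspose_eq_transpose_of_trivial,
    toEuclideanLin_conjTranspose_eq_adjoint, LinearMap.comp_apply, LinearMap.adjoint_inner_left]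

theorem norm_toEuclideanLin_eq_of_transpose_mul_self_eq {A B : Matrix m n ℝ}
    (h : Aᵀ * A = Bᵀ * B) (x : EuclideanSpace ℝ n) :
    ‖toEuclideanLin A x‖ = ‖toEuclideanLin B x‖ := by
  rw [← pow_left_inj₀ (norm_nonneg _) (norm_nonneg _) two_ne_zero, norm_toEuclideanLin_sq,
    norm_toEuclideanLin_sq, h]

end Matrix

theorem MeasureTheory.integrable_of_ae_norm_eq_one {E F : Type*} [NormedAddCommGroup E]
    [ProperSpace E] [MeasurableSpace E] [BorelSpace E] [NormedAddCommGroup F]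
    {μ : Measure E} [IsFiniteMeasure μ] (hμ : ∀ᵐ x ∂μ, ‖x‖ = 1) {f : E → F}
    (hf : Continuous f) :
    Integrable f μ := by
  obtain ⟨C, hC⟩ := (isCompact_sphere (0 : E) 1).exists_bound_of_continuousOn hf.continuousOn
  refine Integrable.of_bound hf.aestronglyMeasurable C ?_
  filter_upwards [hμ] with x hx
  exact hC x (by simpa using hx)

theorem ProbabilityTheory.sq_integral_le_integral_sq {Ω : Type*} [MeasurableSpace Ω]
    {μ : Measure Ω} [IsProbabilityMeasure μ] {f : Ω → ℝ} (hf : MemLp f 2 μ) :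
    (∫ ω, f ω ∂μ) ^ 2 ≤ ∫ ω, f ω ^ 2 ∂μ := by
  have hvar := variance_eq_sub hf
  simp only [Pi.pow_apply] at hvar
  linarith [variance_nonneg f μ]

namespace IsUniformOnSphere

variable {d : ℕ} {μ : Measure (EuclideanSpace ℝ (Fin d))}

theorem integrable (hμ : IsUniformOnSphere μ) {F : Type*} [NormedAddCommGroup F]
    {f : EuclideanSpace ℝ (Fin d) → F} (hf : Continuous f) : Integrable f μ :=
  haveI := hμ.1
  integrable_of_ae_norm_eq_one hμ.2.1 hf

theorem integral_comp_toEuclideanLin (hμ : IsUniformOnSphere μ) {Q : Matrix (Fin d) (Fin d) ℝ}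
    (hQ : Qᵀ * Q = 1) {f : EuclideanSpace ℝ (Fin d) → ℝ} (hf : AEStronglyMeasurable f μ) :
    ∫ x, f (Matrix.toEuclideanLin Q x) ∂μ = ∫ x, f x ∂μ := by
  conv_rhs => rw [← hμ.2.2 Q hQ]
  rw [integral_map (LinearMap.continuous_of_finiteDimensional _).aemeasurable
    (by rwa [hμ.2.2 Q hQ])]

theorem integral_coord_mul_coord_of_ne (hμ : IsUniformOnSphere μ) {i j : Fin d} (hij : i ≠ j) :
    ∫ x, x i * x j ∂μ = 0 := by
  classical
  set s : Fin d → ℝ := fun k => if k = i then -1 else 1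
  have hs : (Matrix.diagonal s)ᵀ * Matrix.diagonal s = 1 := by
    rw [Matrix.diagonal_transpose, Matrix.diagonal_mul_diagonal, ← Matrix.diagonal_one]
    congr 1
    ext k
    by_cases hk : k = i <;> simp [s, hk]
  have hflip := hμ.integral_comp_toEuclideanLin hs
    (by fun_prop : Continuous fun x : EuclideanSpace ℝ (Fin d) => x i * x j).aestronglyMeasurable
  simp only [Matrix.toLpLin_apply, Matrix.mulVec_diagonal, s, if_pos, hij.symm, if_false, neg_mul,
    one_mul, integral_neg] at hflip
  linarith

theorem integral_coord_sq_eq (hμ : IsUniformOnSphere μ) (i j : Fin d) :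
    ∫ x, x i ^ 2 ∂μ = ∫ x, x j ^ 2 ∂μ := by
  set σ := Equiv.swap i j
  have hσ : (σ.permMatrix ℝ)ᵀ * σ.permMatrix ℝ = 1 := by
    rw [Matrix.transpose_permMatrix, ← Matrix.permMatrix_mul, mul_inv_cancel,
      Matrix.permMatrix_one]
  have hswap := hμ.integral_comp_toEuclideanLin hσ
    (by fun_prop : Continuous fun x : EuclideanSpace ℝ (Fin d) => x j ^ 2).aestronglyMeasurable
  simpa [Matrix.toLpLin_apply, Matrix.permMatrix_mulVec, σ] using hswap

theorem integral_coord_sq (hμ : IsUniformOnSphere μ) (i : Fin d) :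
    ∫ x, x i ^ 2 ∂μ = (d : ℝ)⁻¹ := by
  have := hμ.1
  have hsum : ∑ k, ∫ x, x k ^ 2 ∂μ = 1 := by
    rw [← integral_finsetSum _ fun k _ => hμ.integrable (by fun_prop),
      integral_congr_ae (g := fun _ => (1 : ℝ)), integral_const, probReal_univ, one_smul]
    filter_upwards [hμ.2.1] with x hx
    rw [← EuclideanSpace.real_norm_sq_eq, hx, one_pow]
  simp only [fun k => hμ.integral_coord_sq_eq k i, Finset.sum_const, Finset.card_univ,
    Fintype.card_fin, nsmul_eq_mul] at hsum
  exact eq_inv_of_mul_eq_one_right hsum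

theorem integral_coord_mul_coord (hμ : IsUniformOnSphere μ) (i j : Fin d) :
    ∫ x, x i * x j ∂μ = if i = j then (d : ℝ)⁻¹ else 0 := by
  split_ifs with hij
  · simpa [hij, sq] using hμ.integral_coord_sq j
  · exact hμ.integral_coord_mul_coord_of_ne hij

theorem integral_inner_toEuclideanLin_self (hμ : IsUniformOnSphere μ)
    (M : Matrix (Fin d) (Fin d) ℝ) :
    ∫ x, ⟪Matrix.toEuclideanLin M x, x⟫ ∂μ = M.trace / d := by
  have hint (i j : Fin d) :
      Integrable (fun x : EuclideanSpace ℝ (Fin d) => M i j * (x i * x j)) μ :=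
    hμ.integrable (by fun_prop)
  simp_rw [Matrix.inner_toEuclideanLin_self]
  rw [integral_finsetSum _ fun i _ => integrable_finsetSum _ fun j _ => hint i j]
  simp_rw [integral_finsetSum _ fun j _ => hint _ j, integral_const_mul,
    hμ.integral_coord_mul_coord, mul_ite, mul_zero, Finset.sum_ite_eq, Finset.mem_univ, if_true,
    Matrix.trace, Matrix.diag, Finset.sum_div, div_eq_mul_inv]

theorem integral_norm_toEuclideanLin_sq (hμ : IsUniformOnSphere μ)
    (A : Matrix (Fin d) (Fin d) ℝ) :
    ∫ x, ‖Matrix.toEuclideanLin A x‖ ^ 2 ∂μ = frobNorm A ^ 2 / d := by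
  simp_rw [Matrix.norm_toEuclideanLin_sq, hμ.integral_inner_toEuclideanLin_self]
  rw [frobNorm, Real.sq_sqrt (by positivity)]
  congr 1
  simp only [Matrix.trace, Matrix.diag, Matrix.mul_apply, Matrix.transpose_apply, ← sq]
  exact Finset.sum_comm

theorem integral_norm_toEuclideanLin_le (hμ : IsUniformOnSphere μ)
    (A : Matrix (Fin d) (Fin d) ℝ) :
    ∫ x, ‖Matrix.toEuclideanLin A x‖ ∂μ ≤ frobNorm A / √d := by
  have := hμ.1
  have hcont : Continuous fun x => ‖Matrix.toEuclideanLin A x‖ :=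
    (LinearMap.continuous_of_finiteDimensional _).norm
  have hsq := ProbabilityTheory.sq_integral_le_integral_sq
    ((memLp_two_iff_integrable_sq hcont.aestronglyMeasurable).2 (hμ.integrable (by fun_prop)))
  rw [hμ.integral_norm_toEuclideanLin_sq, ← Real.sq_sqrt (Nat.cast_nonneg d), ← div_pow] at hsq
  exact (pow_le_pow_iff_left₀ (integral_nonneg fun _ => norm_nonneg _)
    (div_nonneg (Real.sqrt_nonneg _) (Real.sqrt_nonneg _)) two_ne_zero).1 hsq

theorem nuclearNorm_div_le_integral_norm (hμ : IsUniformOnSphere μ)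
    (A : Matrix (Fin d) (Fin d) ℝ) :
    nuclearNorm A / d ≤ ∫ x, ‖Matrix.toEuclideanLin A x‖ ∂μ := by
  have hM : (Aᵀ * A).PosSemidef := by simpa using Matrix.posSemidef_conjTranspose_mul_self A
  set P := hM.1.cfc Real.sqrt
  have hP : Pᵀ * P = Aᵀ * A := by
    rw [← Matrix.conjTranspose_eq_transpose_of_trivial, (hM.1.isHermitian_cfc _).eq,
      Matrix.PosSemidef.cfc_sqrt_mul_self hM]
  have htrace : P.trace = nuclearNorm A := hM.1.trace_cfc _
  rw [← htrace, ← hμ.integral_inner_toEuclideanLin_self]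
  refine integral_mono_ae (hμ.integrable ?_) (hμ.integrable ?_) ?_
  · exact (LinearMap.continuous_of_finiteDimensional _).inner continuous_id
  · exact (LinearMap.continuous_of_finiteDimensional _).norm
  filter_upwards [hμ.2.1] with x hx
  calc ⟪Matrix.toEuclideanLin P x, x⟫
      ≤ ‖Matrix.toEuclideanLin P x‖ * ‖x‖ := real_inner_le_norm _ _
    _ = ‖Matrix.toEuclideanLin A x‖ := by
      rw [hx, mul_one, Matrix.norm_toEuclideanLin_eq_of_transpose_mul_self_eq hP]

end IsUniformOnSphere

theorem stmt2_general {d : ℕ} (μ : Measure (EuclideanSpace ℝ (Fin d)))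
    (hμ : IsUniformOnSphere μ) (A : Matrix (Fin d) (Fin d) ℝ) :
    nuclearNorm A / d ≤ (∫ x, ‖Matrix.toEuclideanLin A x‖ ∂μ) ∧
    (∫ x, ‖Matrix.toEuclideanLin A x‖ ∂μ) ≤ frobNorm A / Real.sqrt d :=
  ⟨hμ.nuclearNorm_div_le_integral_norm A, hμ.integral_norm_toEuclideanLin_le A⟩

theorem stmt2 {d : ℕ} (hd : 1 ≤ d) (μ : Measure (EuclideanSpace ℝ (Fin d)))
    (hμ : IsUniformOnSphere μ) (A : Matrix (Fin d) (Fin d) ℝ) :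
    nuclearNorm A / d ≤ (∫ x, ‖Matrix.toEuclideanLin A x‖ ∂μ) ∧
    (∫ x, ‖Matrix.toEuclideanLin A x‖ ∂μ) ≤ frobNorm A / Real.sqrt d :=
  stmt2_general μ hμ A
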